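/- arXiv:2305.04779 — 8 statements merged into one kernel-verified Lean document; each statement's English description precedes it below -/
import Mathlib

section
/- Let S ⊆ ℝ₊ⁿ be compact and convex with 0 ∈ S. For z ∈ (ℂ*)ⁿ and w ∈ ℂⁿ with z+w ∈ (ℂ*)ⁿ, H_S(z+w) ≤ H_S(z) + φ_S(|w₁|/|z₁|, …, |w_n|/|z_n|). -/
/-- Support function of `S`. -/
noncomputable def suppFn {n : ℕ} (S : Set (Fin n → ℝ)) (ξ : Fin n → ℝ) : ℝ :=
  sSup ((fun s => ∑ j, s j * ξ j) '' S)

/-- Logarithmic supporting function of `S` on `(ℂ*)ⁿ`. -/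
noncomputable def HS {n : ℕ} (S : Set (Fin n → ℝ)) (z : Fin n → ℂ) : ℝ :=
  suppFn S (fun j => Real.log ‖z j‖)

/-! The triangle inequality gives `log ‖z + w‖ ≤ log ‖z‖ + log (1 + ‖w‖/‖z‖)` coordinatewise, and
`log (1 + x) ≤ x` for `x ≥ 0`. Since `S` lies in the nonnegative orthant, its support function is
monotone, and as a supremum of linear functionals it is subadditive. -/

theorem Real.log_one_add_le_self {x : ℝ} (hx : 0 ≤ x) : Real.log (1 + x) ≤ x := by
  linarith [Real.log_le_sub_one_of_pos (show 0 < 1 + x by positivity)]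

theorem Real.log_norm_add_le {E : Type*} [SeminormedAddCommGroup E] {z w : E}
    (hz : 0 < ‖z‖) (hzw : 0 < ‖z + w‖) :
    Real.log ‖z + w‖ ≤ Real.log ‖z‖ + ‖w‖ / ‖z‖ :=
  calc Real.log ‖z + w‖
      ≤ Real.log (‖z‖ + ‖w‖) := Real.log_le_log hzw (norm_add_le z w)
    _ = Real.log ‖z‖ + Real.log (1 + ‖w‖ / ‖z‖) := by
        rw [← Real.log_mul hz.ne' (by positivity), mul_one_add, mul_div_cancel₀ _ hz.ne']
    _ ≤ Real.log ‖z‖ + ‖w‖ / ‖z‖ := by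
        gcongr
        exact Real.log_one_add_le_self (by positivity)

section SuppFn

variable {n : ℕ} {S : Set (Fin n → ℝ)}

theorem bddAbove_image_suppFn (hc : IsCompact S) (ξ : Fin n → ℝ) :
    BddAbove ((fun s => ∑ j, s j * ξ j) '' S) :=
  (hc.image (by fun_prop)).bddAbove

theorem le_suppFn (hc : IsCompact S) {s : Fin n → ℝ} (hs : s ∈ S) (ξ : Fin n → ℝ) :
    ∑ j, s j * ξ j ≤ suppFn S ξ :=
  le_csSup (bddAbove_image_suppFn hc ξ) ⟨s, hs, rfl⟩

theorem suppFn_le (hS : S.Nonempty) {ξ : Fin n → ℝ} {c : ℝ}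
    (h : ∀ s ∈ S, ∑ j, s j * ξ j ≤ c) : suppFn S ξ ≤ c :=
  csSup_le (hS.image _) (Set.forall_mem_image.2 h)

theorem suppFn_le_add_of_le (hc : IsCompact S) (hS : S.Nonempty)
    (hpos : ∀ s ∈ S, ∀ i, 0 ≤ s i) {ξ η ζ : Fin n → ℝ} (h : ξ ≤ η + ζ) :
    suppFn S ξ ≤ suppFn S η + suppFn S ζ := by
  refine suppFn_le hS fun s hs => ?_
  calc ∑ j, s j * ξ j
      ≤ ∑ j, s j * (η j + ζ j) := by
        gcongr with j
        · exact hpos s hs j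
        · exact h j
    _ = ∑ j, s j * η j + ∑ j, s j * ζ j := by
        simp only [mul_add, Finset.sum_add_distrib]
    _ ≤ suppFn S η + suppFn S ζ := add_le_add (le_suppFn hc hs η) (le_suppFn hc hs ζ)

end SuppFn

theorem stmt_6_general {n : ℕ} (S : Set (Fin n → ℝ)) (hc : IsCompact S)
    (h0 : (0 : Fin n → ℝ) ∈ S) (hpos : ∀ s ∈ S, ∀ i, 0 ≤ s i)
    (z w : Fin n → ℂ) (hz : ∀ j, z j ≠ 0) (hzw : ∀ j, z j + w j ≠ 0) :
    HS S (fun j => z j + w j) ≤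
      HS S z + suppFn S (fun j => ‖w j‖ / ‖z j‖) :=
  suppFn_le_add_of_le hc ⟨0, h0⟩ hpos fun j =>
    Real.log_norm_add_le (norm_pos_iff.2 (hz j)) (norm_pos_iff.2 (hzw j))

/-- `H_S(z+w) ≤ H_S(z) + φ_S(|w₁|/|z₁|,…,|w_n|/|z_n|)`. -/
theorem stmt_6 {n : ℕ} (S : Set (Fin n → ℝ)) (hc : IsCompact S) (hconv : Convex ℝ S)
    (h0 : (0 : Fin n → ℝ) ∈ S) (hpos : ∀ s ∈ S, ∀ i, 0 ≤ s i)
    (z w : Fin n → ℂ) (hz : ∀ j, z j ≠ 0) (hzw : ∀ j, z j + w j ≠ 0) :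
    HS S (fun j => z j + w j) ≤
      HS S z + suppFn S (fun j => ‖w j‖ / ‖z j‖) :=
  stmt_6_general S hc h0 hpos z w hz hzw
end

section
/- Let S ⊆ ℝ₊ⁿ be compact and convex with 0 ∈ S. For a point a ∈ ℂⁿ with a ≠ 0 lying on a coordinate hyperplane, let J = {j₁ < ⋯ < j_ℓ} be the set of indices of the nonzero coordinates of a, and let S_J = {t ∈ ℝ^ℓ : the vector s with s_{j_k} = t_k and s_j = 0 for j ∉ J lies in S}. Then limsup over w → a with w ∈ (ℂ*)ⁿ of H_S(w) equals H_{S_J}(a_{j₁},…,a_{j_ℓ}). -/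
open Filter

/-- Support function over a general finite index type. -/
noncomputable def suppFnI {ι : Type*} [Fintype ι] (S : Set (ι → ℝ)) (ξ : ι → ℝ) : ℝ :=
  sSup ((fun s => ∑ j, s j * ξ j) '' S)

/-- Logarithmic supporting function over a general finite index type. -/
noncomputable def HSI {ι : Type*} [Fintype ι] (S : Set (ι → ℝ)) (z : ι → ℂ) : ℝ :=
  suppFnI S (fun j => Real.log ‖z j‖)

/-!
As `w → a` inside `(ℂ*)ⁿ`, the coordinates `log |w_j|` converge to `log |a_j|` for `j ∈ J` and
tend to `-∞` off `J`. Since `S` lies in the positive orthant, a point `s ∈ S` with `s_k > 0` for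
some `k ∉ J` makes `⟨s, log |w|⟩` tend to `-∞`, while near a point of `S` vanishing off `J` the
pairing is at most `H_{S_J}(a_J) + ε`. Compactness of `S` makes these local bounds uniform, which
gives `limsup ≤ H_{S_J}(a_J)`; the reverse inequality holds because every `t ∈ S_J` contributes the
continuous minorant `∑_{j ∈ J} t_j log |w_j|` of `H_S(w)`.
-/

open Topology

variable {ι : Type*}

section SupportFunction

variable [Fintype ι] {S : Set (ι → ℝ)}

theorem le_suppFnI (hS : IsCompact S) {s : ι → ℝ} (hs : s ∈ S) (ξ : ι → ℝ) :
    ∑ j, s j * ξ j ≤ suppFnI S ξ :=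
  le_csSup (hS.bddAbove_image (by fun_prop)) ⟨s, hs, rfl⟩

theorem suppFnI_le (hne : S.Nonempty) {ξ : ι → ℝ} {c : ℝ} (h : ∀ s ∈ S, ∑ j, s j * ξ j ≤ c) :
    suppFnI S ξ ≤ c :=
  csSup_le (hne.image _) (Set.forall_mem_image.2 h)

theorem suppFnI_nonneg (hS : IsCompact S) (h0 : 0 ∈ S) (ξ : ι → ℝ) : 0 ≤ suppFnI S ξ := by
  simpa using le_suppFnI hS h0 ξ

end SupportFunction

section Slice

variable (Z : ι → Prop) [DecidablePred Z]

def extendZero (t : {j // ¬ Z j} → ℝ) : ι → ℝ := fun j => if h : Z j then 0 else t ⟨j, h⟩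

/-- The slice `S_J` of `S` over the coordinates `J = {j | ¬ Z j}`. -/
def slice (S : Set (ι → ℝ)) : Set ({j // ¬ Z j} → ℝ) := extendZero Z ⁻¹' S

variable {Z}

@[simp]
theorem extendZero_apply_val (t : {j // ¬ Z j} → ℝ) (j : {j // ¬ Z j}) :
    extendZero Z t j = t j :=
  dif_neg j.2

theorem extendZero_zero : extendZero Z 0 = 0 := by
  ext j
  by_cases hj : Z j <;> simp [extendZero, hj]

theorem extendZero_restrict {s : ι → ℝ} (hs : ∀ j, Z j → s j = 0) :
    extendZero Z (fun j => s j) = s := by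
  ext j
  by_cases hj : Z j <;> simp [extendZero, hj, hs]

theorem sum_extendZero_mul [Fintype ι] (t : {j // ¬ Z j} → ℝ) (v : ι → ℝ) :
    ∑ j, extendZero Z t j * v j = ∑ j : {j // ¬ Z j}, t j * v j := by
  have hZ (j : {j // Z j}) : extendZero Z t j = 0 := dif_pos j.2
  rw [← Fintype.sum_subtype_add_sum_subtype Z]
  simp only [hZ, extendZero_apply_val, zero_mul, Finset.sum_const_zero, zero_add]

theorem continuous_extendZero : Continuous (extendZero Z) :=
  continuous_pi fun j => by
    unfold extendZero
    split <;> fun_prop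

theorem isCompact_slice {S : Set (ι → ℝ)} (hS : IsCompact S) : IsCompact (slice Z S) :=
  have hinv : Function.LeftInverse (fun s (j : {j // ¬ Z j}) => s j) (extendZero Z) :=
    fun t => funext (extendZero_apply_val t)
  (hinv.isClosedEmbedding (by fun_prop) continuous_extendZero).isCompact_preimage hS

end Slice

section Limsup

variable [Fintype ι] {X : Type*} {Z : ι → Prop} [DecidablePred Z] {S : Set (ι → ℝ)}
  {l : Filter X} {u : X → ι → ℝ} {ξ : {j // ¬ Z j} → ℝ}

theorem tendsto_sum_subtype_mul_prod
    (hJ : ∀ j : {j // ¬ Z j}, Tendsto (fun x => u x j) l (𝓝 (ξ j))) (s₀ : ι → ℝ) :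
    Tendsto (fun z : X × (ι → ℝ) => ∑ j : {j // ¬ Z j}, z.2 j * u z.1 j) (l ×ˢ 𝓝 s₀)
      (𝓝 (∑ j : {j // ¬ Z j}, s₀ j * ξ j)) :=
  tendsto_finsetSum _ fun j _ =>
    (((continuous_apply (j : ι)).tendsto s₀).comp tendsto_snd).mul ((hJ j).comp tendsto_fst)

theorem eventually_sum_mul_le_suppFnI_slice_add (hS : IsCompact S)
    (hpos : ∀ s ∈ S, ∀ j, 0 ≤ s j)
    (hJ : ∀ j : {j // ¬ Z j}, Tendsto (fun x => u x j) l (𝓝 (ξ j)))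
    (hZ : ∀ j, Z j → Tendsto (fun x => u x j) l atBot) {s₀ : ι → ℝ} (hs₀ : s₀ ∈ S)
    {ε : ℝ} (hε : 0 < ε) :
    ∀ᶠ z in l ×ˢ 𝓝 s₀, z.2 ∈ S → ∑ j, z.2 j * u z.1 j ≤ suppFnI (slice Z S) ξ + ε := by
  set R := suppFnI (slice Z S) ξ
  have hJsum := tendsto_sum_subtype_mul_prod hJ s₀
  have hZnonpos : ∀ᶠ z in l ×ˢ 𝓝 s₀, ∀ j : {j // Z j}, u z.1 j ≤ 0 :=
    tendsto_fst.eventually <| eventually_all.2 fun j : {j // Z j} =>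
      (hZ j j.2).eventually (eventually_le_atBot 0)
  by_cases hvan : ∀ j, Z j → s₀ j = 0
  · have hR : ∑ j : {j // ¬ Z j}, s₀ j * ξ j ≤ R := by
      refine le_suppFnI (isCompact_slice hS) (s := fun j => s₀ j) ?_ ξ
      simpa [slice, extendZero_restrict hvan] using hs₀
    filter_upwards [hZnonpos, hJsum.eventually (gt_mem_nhds (lt_add_of_le_of_pos hR hε))]
      with z hzZ hzJ hzS
    have : ∑ j : {j // Z j}, z.2 j * u z.1 j ≤ 0 :=
      Finset.sum_nonpos fun j _ => mul_nonpos_of_nonneg_of_nonpos (hpos _ hzS j) (hzZ j)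
    rw [← Fintype.sum_subtype_add_sum_subtype Z]
    linarith
  · obtain ⟨k, hk, hk0⟩ := not_forall₂.mp hvan
    -- a coordinate of `s₀` off `J` is positive, so its term drags the pairing to `-∞`
    have hterm : Tendsto (fun z : X × (ι → ℝ) => z.2 k * u z.1 k) (l ×ˢ 𝓝 s₀) atBot :=
      Tendsto.pos_mul_atBot ((hpos s₀ hs₀ k).lt_of_ne' hk0)
        (((continuous_apply k).tendsto s₀).comp tendsto_snd) ((hZ k hk).comp tendsto_fst)
    set c := ∑ j : {j // ¬ Z j}, s₀ j * ξ j
    filter_upwards [hZnonpos, hJsum.eventually (gt_mem_nhds (lt_add_one c)),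
      hterm.eventually (eventually_le_atBot (R + ε - (c + 1)))] with z hzZ hzJ hzk hzS
    have : ∑ j : {j // Z j}, z.2 j * u z.1 j ≤ z.2 k * u z.1 k := by
      have hsub : ({⟨k, hk⟩} : Finset {j // Z j}) ⊆ Finset.univ := Finset.subset_univ _
      refine (Finset.sum_le_sum_of_subset_of_nonpos' hsub fun j _ _ => ?_).trans_eq
        (Finset.sum_singleton _ _)
      exact mul_nonpos_of_nonneg_of_nonpos (hpos _ hzS j) (hzZ j)
    rw [← Fintype.sum_subtype_add_sum_subtype Z]
    linarith

theorem eventually_suppFnI_le_suppFnI_slice_add (hS : IsCompact S) (hne : S.Nonempty)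
    (hpos : ∀ s ∈ S, ∀ j, 0 ≤ s j)
    (hJ : ∀ j : {j // ¬ Z j}, Tendsto (fun x => u x j) l (𝓝 (ξ j)))
    (hZ : ∀ j, Z j → Tendsto (fun x => u x j) l atBot) {ε : ℝ} (hε : 0 < ε) :
    ∀ᶠ x in l, suppFnI S (u x) ≤ suppFnI (slice Z S) ξ + ε := by
  have hunif : ∀ᶠ z in l ×ˢ 𝓝ˢ S, z.2 ∈ S → ∑ j, z.2 j * u z.1 j ≤ suppFnI (slice Z S) ξ + ε :=
    hS.mem_prod_nhdsSet_of_forall fun s₀ hs₀ =>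
      eventually_sum_mul_le_suppFnI_slice_add hS hpos hJ hZ hs₀ hε
  filter_upwards [hunif.curry] with x hx
  exact suppFnI_le hne fun s hs => hx.self_of_nhdsSet s hs hs

theorem limsup_suppFnI_eq_suppFnI_slice [l.NeBot] (hS : IsCompact S) (h0 : 0 ∈ S)
    (hpos : ∀ s ∈ S, ∀ j, 0 ≤ s j)
    (hJ : ∀ j : {j // ¬ Z j}, Tendsto (fun x => u x j) l (𝓝 (ξ j)))
    (hZ : ∀ j, Z j → Tendsto (fun x => u x j) l atBot) :
    limsup (fun x => suppFnI S (u x)) l = suppFnI (slice Z S) ξ := by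
  have hupper (ε : ℝ) (hε : 0 < ε) :=
    eventually_suppFnI_le_suppFnI_slice_add hS ⟨0, h0⟩ hpos hJ hZ hε
  have hbdd : IsBoundedUnder (· ≤ ·) l fun x => suppFnI S (u x) := ⟨_, hupper 1 one_pos⟩
  have hcobdd : IsCoboundedUnder (· ≤ ·) l fun x => suppFnI S (u x) :=
    isCoboundedUnder_le_of_le l fun x => suppFnI_nonneg hS h0 (u x)
  refine le_antisymm
    (le_of_forall_pos_le_add fun ε hε => limsup_le_of_le hcobdd (hupper ε hε)) ?_
  refine suppFnI_le ⟨0, by simpa [slice, extendZero_zero] using h0⟩ fun t ht => ?_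
  have htend : Tendsto (fun x => ∑ j, t j * u x j) l (𝓝 (∑ j, t j * ξ j)) :=
    tendsto_finsetSum _ fun j _ => (hJ j).const_mul (t j)
  rw [← htend.limsup_eq]
  refine limsup_le_limsup (Eventually.of_forall fun x => ?_) htend.isCoboundedUnder_le hbdd
  simpa only [sum_extendZero_mul] using le_suppFnI hS ht (u x)

end Limsup

section LogNorm

variable {E : Type*} [NormedAddCommGroup E] {a : ι → E}

theorem tendsto_log_norm_apply {s : Set (ι → E)} {j : ι} (hj : a j ≠ 0) :
    Tendsto (fun w : ι → E => Real.log ‖w j‖) (𝓝[s] a) (𝓝 (Real.log ‖a j‖)) :=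
  (((continuous_apply j).norm.tendsto a).log (norm_ne_zero_iff.2 hj)).mono_left
    nhdsWithin_le_nhds

theorem tendsto_log_norm_apply_atBot {j : ι} (hj : a j = 0) :
    Tendsto (fun w : ι → E => Real.log ‖w j‖) (𝓝[{w | ∀ j, w j ≠ 0}] a) atBot := by
  have hnorm : Tendsto (fun w : ι → E => ‖w j‖) (𝓝[{w | ∀ j, w j ≠ 0}] a) (𝓝[≠] 0) := by
    refine tendsto_nhdsWithin_iff.2 ⟨?_, eventually_mem_nhdsWithin.mono fun w hw => ?_⟩
    · simpa [hj] using ((continuous_apply j).norm.tendsto a).mono_left nhdsWithin_le_nhds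
    · exact norm_ne_zero_iff.2 (hw j)
  exact Real.tendsto_log_nhdsNE_zero.comp hnorm

end LogNorm

theorem nhdsWithin_forall_ne_zero_neBot {𝕜 : Type*} [NontriviallyNormedField 𝕜]
    (a : ι → 𝕜) : (𝓝[{w | ∀ j, w j ≠ 0}] a).NeBot := by
  have hdense : Dense {w : ι → 𝕜 | ∀ j, w j ≠ 0} := by
    simpa [Set.pi] using dense_pi Set.univ fun j _ => dense_compl_singleton (0 : 𝕜)
  exact mem_closure_iff_nhdsWithin_neBot.1 (hdense a)

open Classical in
theorem stmt_8_general {n : ℕ} (S : Set (Fin n → ℝ)) (hc : IsCompact S)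
    (h0 : (0 : Fin n → ℝ) ∈ S) (hpos : ∀ s ∈ S, ∀ i, 0 ≤ s i)
    (a : Fin n → ℂ) :
    limsup (fun w : Fin n → ℂ => HSI S w) (nhdsWithin a {w | ∀ j, w j ≠ 0}) =
      HSI {t : {j : Fin n // a j ≠ 0} → ℝ |
            (fun j : Fin n => if h : a j = 0 then 0 else t ⟨j, h⟩) ∈ S}
        (fun j => a j.1) := by
  have := nhdsWithin_forall_ne_zero_neBot a
  exact limsup_suppFnI_eq_suppFnI_slice (Z := fun j => a j = 0) hc h0 hpos
    (fun j => tendsto_log_norm_apply j.2) (fun _ hj => tendsto_log_norm_apply_atBot hj)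

open Classical in
/-- The value of `H_S` at a point `a ≠ 0` of a coordinate hyperplane, obtained as the
upper limit over `(ℂ*)ⁿ ∋ w → a`, equals `H_{S_J}` at the nonzero coordinates of `a`,
where `S_J` is the slice of `S` over the coordinates `J` where `a` is nonzero. -/
theorem stmt_8 {n : ℕ} (S : Set (Fin n → ℝ)) (hc : IsCompact S) (hconv : Convex ℝ S)
    (h0 : (0 : Fin n → ℝ) ∈ S) (hpos : ∀ s ∈ S, ∀ i, 0 ≤ s i)
    (a : Fin n → ℂ) (ha : a ≠ 0) (hhyp : ∃ j, a j = 0) :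
    limsup (fun w : Fin n → ℂ => HSI S w) (nhdsWithin a {w | ∀ j, w j ≠ 0}) =
      HSI {t : {j : Fin n // a j ≠ 0} → ℝ |
            (fun j : Fin n => if h : a j = 0 then 0 else t ⟨j, h⟩) ∈ S}
        (fun j => a j.1) :=
  stmt_8_general S hc h0 hpos a
end

section
/- A compact convex set S ⊆ ℝ₊ⁿ with 0 ∈ S is a lower set (i.e. for every s ∈ S the box [0,s₁]×⋯×[0,s_n] is contained in S) if and only if the support function satisfies φ_S(ξ) = φ_S(ξ⁺) for all ξ ∈ ℝⁿ, where ξ⁺ = (max{ξ₁,0},…,max{ξ_n,0}). -/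
/-- A compact convex `S ⊆ ℝ₊ⁿ` with `0 ∈ S` is a lower set iff
`φ_S(ξ) = φ_S(ξ⁺)` for all `ξ`. -/
theorem stmt_9 {n : ℕ} (S : Set (Fin n → ℝ)) (hc : IsCompact S) (hconv : Convex ℝ S)
    (h0 : (0 : Fin n → ℝ) ∈ S) (hpos : ∀ s ∈ S, ∀ i, 0 ≤ s i) :
    (∀ s ∈ S, ∀ x : Fin n → ℝ, (∀ j, 0 ≤ x j ∧ x j ≤ s j) → x ∈ S) ↔
      (∀ ξ : Fin n → ℝ, suppFn S ξ = suppFn S (fun j => max (ξ j) 0)) := by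
  have hne : S.Nonempty := ⟨0, h0⟩
  have hcont : ∀ ξ : Fin n → ℝ, Continuous fun s : Fin n → ℝ => ∑ j, s j * ξ j := by
    intro ξ
    exact continuous_finset_sum _ fun j _ => (continuous_apply j).mul continuous_const
  have hbdd : ∀ ξ : Fin n → ℝ, BddAbove ((fun s => ∑ j, s j * ξ j) '' S) :=
    fun ξ => (hc.image (hcont ξ)).bddAbove
  constructor
  · intro hl ξ
    apply le_antisymm
    · apply csSup_le (hne.image _)
      rintro y ⟨s, hs, rfl⟩
      have h1 : ∑ j, s j * ξ j ≤ ∑ j, s j * max (ξ j) 0 :=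
        Finset.sum_le_sum fun j _ =>
          mul_le_mul_of_nonneg_left (le_max_left _ _) (hpos s hs j)
      exact h1.trans (le_csSup (hbdd _) ⟨s, hs, rfl⟩)
    · apply csSup_le (hne.image _)
      rintro y ⟨s, hs, rfl⟩
      dsimp only
      set x : Fin n → ℝ := fun j => if 0 ≤ ξ j then s j else 0 with hx
      have hxS : x ∈ S := by
        apply hl s hs
        intro j
        by_cases h : 0 ≤ ξ j <;> simp [hx, h, hpos s hs j]
      have heq : ∑ j, s j * max (ξ j) 0 = ∑ j, x j * ξ j := by
        apply Finset.sum_congr rfl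
        intro j _
        by_cases h : 0 ≤ ξ j
        · simp [hx, h, max_eq_left h]
        · simp [hx, h, max_eq_right (le_of_not_ge h)]
      rw [heq]
      exact le_csSup (hbdd _) ⟨x, hxS, rfl⟩
  · intro hφ s hs x hx
    by_contra hxS
    obtain ⟨f, u, hfs, hux⟩ :=
      geometric_hahn_banach_closed_point hconv hc.isClosed hxS
    set ξ : Fin n → ℝ := fun j => f (Pi.single j 1) with hξ
    have hfa : ∀ a : Fin n → ℝ, f a = ∑ j, a j * ξ j := by
      intro a
      conv_lhs => rw [← Finset.univ_sum_single a]
      rw [map_sum]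
      apply Finset.sum_congr rfl
      intro j _
      have : Pi.single j (a j) = a j • (Pi.single j (1 : ℝ) : Fin n → ℝ) := by
        funext k
        by_cases h : k = j <;> simp [Pi.single_apply, h]
      rw [this, map_smul, smul_eq_mul, hξ]
    have hsup_le : suppFn S ξ ≤ u := by
      apply csSup_le (hne.image _)
      rintro y ⟨a, ha, rfl⟩
      dsimp only
      rw [← hfa a]
      exact (hfs a ha).le
    have hfx : f x ≤ suppFn S ξ := by
      rw [hfa x]
      have h1 : ∑ j, x j * ξ j ≤ ∑ j, x j * max (ξ j) 0 :=
        Finset.sum_le_sum fun j _ =>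
          mul_le_mul_of_nonneg_left (le_max_left _ _) (hx j).1
      have h2 : ∑ j, x j * max (ξ j) 0 ≤ ∑ j, s j * max (ξ j) 0 :=
        Finset.sum_le_sum fun j _ =>
          mul_le_mul_of_nonneg_right (hx j).2 (le_max_right _ _)
      have h3 : ∑ j, s j * max (ξ j) 0 ≤ suppFn S (fun j => max (ξ j) 0) :=
        le_csSup (hbdd _) ⟨s, hs, rfl⟩
      calc ∑ j, x j * ξ j ≤ suppFn S (fun j => max (ξ j) 0) := (h1.trans h2).trans h3
        _ = suppFn S ξ := (hφ ξ).symm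
    exact absurd (hux.trans_le (hfx.trans hsup_le)) (lt_irrefl u)
end

section
/- Let S ⊆ ℝ₊ⁿ be compact and convex with 0 ∈ S, and suppose φ_S(ξ) = φ_S(ξ⁺) for all ξ ∈ ℝⁿ. Then with σ_S = φ_S(1,…,1), for all z, w ∈ (ℂ*)ⁿ with z-w ∈ (ℂ*)ⁿ we have H_S(z-w) ≤ σ_S·max_j|w_j| + H_S(z). -/
/-!
As `φ_S(ξ) = φ_S(ξ⁺)`, both sides can be computed on positive parts:
`H_S(z) = φ_S(log⁺|z₁|, …, log⁺|zₙ|)`. Since `log⁺` is 1-Lipschitz on `[0, ∞)`,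
`log⁺|zⱼ - wⱼ| ≤ log⁺|zⱼ| + M` with `M = maxⱼ |wⱼ|`. As `S` lies in the positive orthant, `φ_S`
is monotone; it is also subadditive and positively homogeneous, so
`φ_S(ξ⁺) ≤ φ_S(η⁺ + M·𝟙) ≤ φ_S(η⁺) + M σ_S` for `ξ = log|z - w|`, `η = log|z|`.
-/

open Real

/-- `log⁺ = log ∘ max 1` on `[0, ∞)`, and `log` is 1-Lipschitz on `[1, ∞)`. -/
theorem Real.posLog_le_posLog_add_abs_sub {x y : ℝ} (hx : 0 ≤ x) (hy : 0 ≤ y) :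
    log⁺ x ≤ log⁺ y + |x - y| := by
  rw [posLog_eq_log_max_one hx, posLog_eq_log_max_one hy, max_comm 1 x, max_comm 1 y]
  set a := max x 1
  set b := max y 1
  have hb : 1 ≤ b := le_max_right y 1
  have ha : 0 < a := one_pos.trans_le (le_max_right x 1)
  calc log a = log b + log (a / b) := by
          rw [log_div ha.ne' (by positivity)]; ring
    _ ≤ log b + (a - b) / b := by
          gcongr
          rw [sub_div, div_self (by positivity)]
          exact log_le_sub_one_of_pos (by positivity)
    _ ≤ log b + |a - b| := by
          gcongr
          exact (div_le_div_of_nonneg_right (le_abs_self _) (by positivity)).trans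
            (div_le_self (abs_nonneg _) hb)
    _ ≤ log b + |x - y| := by linarith [abs_max_sub_max_le_abs x y 1]

theorem Real.posLog_norm_sub_le {E : Type*} [SeminormedAddCommGroup E] (a b : E) :
    log⁺ ‖a - b‖ ≤ log⁺ ‖a‖ + ‖b‖ :=
  calc log⁺ ‖a - b‖ ≤ log⁺ ‖a‖ + |‖a - b‖ - ‖a‖| :=
        posLog_le_posLog_add_abs_sub (norm_nonneg _) (norm_nonneg _)
    _ ≤ log⁺ ‖a‖ + ‖b‖ := by
        gcongr
        simpa using abs_norm_sub_norm_le (a - b) a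

section suppFn

variable {n : ℕ} {S : Set (Fin n → ℝ)}

theorem IsCompact.bddAbove_image_sum_mul (hS : IsCompact S) (ξ : Fin n → ℝ) :
    BddAbove ((fun s => ∑ j, s j * ξ j) '' S) :=
  (hS.image (by fun_prop)).bddAbove

theorem sum_mul_le_suppFn (hS : IsCompact S) {s : Fin n → ℝ} (hs : s ∈ S) (ξ : Fin n → ℝ) :
    ∑ j, s j * ξ j ≤ suppFn S ξ :=
  le_csSup (hS.bddAbove_image_sum_mul ξ) ⟨s, hs, rfl⟩

theorem suppFn_add_le (hS : IsCompact S) (hne : S.Nonempty) (ξ η : Fin n → ℝ) :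
    suppFn S (ξ + η) ≤ suppFn S ξ + suppFn S η := by
  refine csSup_le (hne.image _) ?_
  rintro _ ⟨s, hs, rfl⟩
  simp only [Pi.add_apply, mul_add, Finset.sum_add_distrib]
  exact add_le_add (sum_mul_le_suppFn hS hs ξ) (sum_mul_le_suppFn hS hs η)

theorem suppFn_smul {c : ℝ} (hc : 0 ≤ c) (ξ : Fin n → ℝ) :
    suppFn S (c • ξ) = c * suppFn S ξ := by
  rw [suppFn, suppFn, ← smul_eq_mul, ← Real.sSup_smul_of_nonneg hc, ← Set.image_smul,
    Set.image_image]
  simp only [Pi.smul_apply, smul_eq_mul, Finset.mul_sum, mul_left_comm c]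

theorem suppFn_mono (hS : IsCompact S) (hne : S.Nonempty) (hpos : ∀ s ∈ S, ∀ i, 0 ≤ s i) :
    Monotone (suppFn S) := by
  intro ξ η hξη
  refine csSup_le (hne.image _) ?_
  rintro _ ⟨s, hs, rfl⟩
  exact (Finset.sum_le_sum fun j _ => mul_le_mul_of_nonneg_left (hξη j) (hpos s hs j)).trans
    (sum_mul_le_suppFn hS hs η)

end suppFn

theorem stmt_10_general {n : ℕ} [NeZero n] (S : Set (Fin n → ℝ)) (hc : IsCompact S)
    (h0 : (0 : Fin n → ℝ) ∈ S) (hpos : ∀ s ∈ S, ∀ i, 0 ≤ s i)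
    (hplus : ∀ ξ : Fin n → ℝ, suppFn S ξ = suppFn S (fun j => max (ξ j) 0))
    (z w : Fin n → ℂ) :
    HS S (fun j => z j - w j) ≤
      suppFn S (fun _ => 1) *
        (Finset.univ.sup' Finset.univ_nonempty fun j => ‖w j‖) + HS S z := by
  set M := Finset.univ.sup' Finset.univ_nonempty fun j => ‖w j‖
  have hM : 0 ≤ M := Finset.le_sup'_of_le _ (Finset.mem_univ 0) (norm_nonneg _)
  have hlog : (fun j => max (log ‖z j - w j‖) 0) ≤
      M • (fun _ => 1) + fun j => max (log ‖z j‖) 0 := by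
    intro j
    have hw : ‖w j‖ ≤ M := Finset.le_sup' (fun j => ‖w j‖) (Finset.mem_univ j)
    have := posLog_norm_sub_le (z j) (w j)
    rw [posLog_apply, posLog_apply, max_comm, max_comm 0] at this
    simp only [Pi.add_apply, Pi.smul_apply, smul_eq_mul, mul_one]
    linarith
  rw [HS, HS, hplus, hplus fun j => log ‖z j‖, mul_comm, ← suppFn_smul hM]
  exact (suppFn_mono hc ⟨0, h0⟩ hpos hlog).trans (suppFn_add_le hc ⟨0, h0⟩ _ _)

/-- If `φ_S(ξ) = φ_S(ξ⁺)` then `H_S(z-w) ≤ σ_S·max_j|w_j| + H_S(z)`. -/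
theorem stmt_10 {n : ℕ} [NeZero n] (S : Set (Fin n → ℝ)) (hc : IsCompact S)
    (hconv : Convex ℝ S) (h0 : (0 : Fin n → ℝ) ∈ S) (hpos : ∀ s ∈ S, ∀ i, 0 ≤ s i)
    (hplus : ∀ ξ : Fin n → ℝ, suppFn S ξ = suppFn S (fun j => max (ξ j) 0))
    (z w : Fin n → ℂ) (hz : ∀ j, z j ≠ 0) (hzw : ∀ j, z j - w j ≠ 0) :
    HS S (fun j => z j - w j) ≤
      suppFn S (fun _ => 1) *
        (Finset.univ.sup' Finset.univ_nonempty fun j => ‖w j‖) + HS S z :=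
  stmt_10_general S hc h0 hpos hplus z w
end

section
/- Let S ⊆ ℝ₊ⁿ be compact and convex, and let Γ ⊆ ℝⁿ be a closed convex cone with nonempty interior meeting the open positive orthant. Then the Γ-hull Ŝ_Γ := {x ∈ ℝ₊ⁿ : ⟨x,ξ⟩ ≤ φ_S(ξ) for all ξ ∈ Γ} equals (S − Γ°) ∩ ℝ₊ⁿ, where Γ° = {x : ⟨x,ξ⟩ ≥ 0 for all ξ ∈ Γ} is the dual cone. -/
open Pointwise Matrix

section Separation

variable {E : Type*} [TopologicalSpace E] [AddCommGroup E] [IsTopologicalAddGroup E]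
  [Module ℝ E] [ContinuousSMul ℝ E] [LocallyConvexSpace ℝ E]

theorem ProperCone.mem_sub_iff_forall_le_sSup (C : ProperCone ℝ E) {S : Set E}
    (hS : IsCompact S) (hSconv : Convex ℝ S) (hSne : S.Nonempty) {x : E} :
    x ∈ S - (C : Set E) ↔
      ∀ f : StrongDual ℝ E, (∀ c ∈ C, 0 ≤ f c) → f x ≤ sSup (f '' S) := by
  constructor
  · rintro ⟨s, hs, c, hc, rfl⟩ f hfC
    calc f (s - c) = f s - f c := map_sub f s c
      _ ≤ f s := sub_le_self _ (hfC c hc)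
      _ ≤ sSup (f '' S) := le_csSup (hS.image f.continuous).bddAbove (Set.mem_image_of_mem f hs)
  · contrapose!
    intro hx
    have hdisj : Disjoint (-x +ᵥ S) (C : Set E) := by
      rw [Set.disjoint_left]
      rintro _ ⟨s, hs, rfl⟩ hc
      exact hx ⟨s, hs, -x +ᵥ s, hc, by simp⟩
    obtain ⟨f, hfC, hfS⟩ := C.hyperplane_separation (hSconv.vadd (-x)) (hS.vadd (-x)) hdisj
    obtain ⟨s, hs, hfs⟩ := (hS.image f.continuous).sSup_mem (hSne.image f)
    refine ⟨f, hfC, ?_⟩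
    have hsep := hfS (-x + s) ⟨s, hs, rfl⟩
    rw [map_add, map_neg] at hsep
    linarith

end Separation

section ConeOfConvex

variable {E : Type*} [TopologicalSpace E] [AddCommGroup E] [Module ℝ E]

def ProperCone.ofConvex (s : Set E) (hne : s.Nonempty) (hclosed : IsClosed s)
    (hconv : Convex ℝ s) (hsmul : ∀ t : ℝ, 0 ≤ t → ∀ x ∈ s, t • x ∈ s) : ProperCone ℝ E where
  carrier := s
  add_mem' {x y} hx hy := by
    have h := hsmul 2 zero_le_two _ (hconv hx hy one_half_pos.le one_half_pos.le (add_halves 1))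
    rwa [smul_add, smul_smul, smul_smul, mul_one_div_cancel two_ne_zero, one_smul, one_smul] at h
  zero_mem' := by
    obtain ⟨x, hx⟩ := hne
    simpa using hsmul 0 le_rfl x hx
  smul_mem' c x hx := hsmul c c.2 x hx
  isClosed' := hclosed

@[simp] lemma ProperCone.mem_ofConvex {s : Set E} {hne : s.Nonempty} {hclosed : IsClosed s}
    {hconv : Convex ℝ s} {hsmul : ∀ t : ℝ, 0 ≤ t → ∀ x ∈ s, t • x ∈ s} {x : E} :
    x ∈ ProperCone.ofConvex s hne hclosed hconv hsmul ↔ x ∈ s := .rfl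

end ConeOfConvex

section DotProduct

variable {ι : Type*} [Fintype ι]

noncomputable def dotProductDualEquiv [DecidableEq ι] : (ι → ℝ) ≃ₗ[ℝ] StrongDual ℝ (ι → ℝ) :=
  (dotProductEquiv ℝ ι).trans LinearMap.toContinuousLinearMap

@[simp] lemma dotProductDualEquiv_apply [DecidableEq ι] (w x : ι → ℝ) :
    dotProductDualEquiv w x = w ⬝ᵥ x := rfl

noncomputable def ProperCone.dotDual (s : Set (ι → ℝ)) : ProperCone ℝ (ι → ℝ) where
  toSubmodule := PointedCone.dual (dotProductBilin ℝ ℝ).flip s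
  isClosed' := PointedCone.isClosed_dual fun _ => LinearMap.continuous_of_finiteDimensional _

lemma ProperCone.mem_dotDual {s : Set (ι → ℝ)} {t : ι → ℝ} :
    t ∈ dotDual s ↔ ∀ ξ ∈ s, 0 ≤ t ⬝ᵥ ξ := .rfl

theorem ProperCone.dotDual_dotDual [DecidableEq ι] (K : ProperCone ℝ (ι → ℝ)) :
    dotDual (dotDual (K : Set (ι → ℝ)) : Set (ι → ℝ)) = K := by
  refine le_antisymm (fun ξ hξ => ?_) fun ξ hξ => mem_dotDual.2 fun t ht => ?_
  · by_contra hξK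
    obtain ⟨f, hfK, hfξ⟩ := K.hyperplane_separation_point hξK
    obtain ⟨w, rfl⟩ := dotProductDualEquiv.surjective f
    have hw : w ∈ dotDual K := mem_dotDual.2 fun c hc => by simpa using hfK c hc
    have hwξ := mem_dotDual.1 hξ w hw
    rw [dotProduct_comm] at hwξ
    exact (hwξ.trans_lt (by simpa using hfξ)).false
  · rw [dotProduct_comm]
    exact mem_dotDual.1 ht ξ hξ

end DotProduct

lemma suppFn_eq_sSup_dotProduct {n : ℕ} (S : Set (Fin n → ℝ)) (ξ : Fin n → ℝ) :
    suppFn S ξ = sSup ((ξ ⬝ᵥ ·) '' S) := by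
  simp only [suppFn, dotProduct_comm ξ]
  rfl

theorem mem_sub_dotDual_iff_forall_le_suppFn {n : ℕ} {S : Set (Fin n → ℝ)} (hS : IsCompact S)
    (hSconv : Convex ℝ S) (hSne : S.Nonempty) (K : ProperCone ℝ (Fin n → ℝ)) {x : Fin n → ℝ} :
    x ∈ S - (ProperCone.dotDual (K : Set (Fin n → ℝ)) : Set (Fin n → ℝ)) ↔
      ∀ ξ ∈ K, x ⬝ᵥ ξ ≤ suppFn S ξ := by
  rw [ProperCone.mem_sub_iff_forall_le_sSup _ hS hSconv hSne,
    dotProductDualEquiv.surjective.forall]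
  refine forall_congr' fun ξ => ?_
  have hK : ξ ∈ K ↔ ∀ c ∈ ProperCone.dotDual K, 0 ≤ ξ ⬝ᵥ c := by
    conv_lhs => rw [← K.dotDual_dotDual]
    exact ProperCone.mem_dotDual
  rw [hK, dotProduct_comm x, suppFn_eq_sSup_dotProduct]
  rfl

theorem stmt_12_general {n : ℕ} (S : Set (Fin n → ℝ)) (hc : IsCompact S) (hconv : Convex ℝ S)
    (hne : S.Nonempty)
    (Γ : Set (Fin n → ℝ)) (hΓc : IsClosed Γ) (hΓconv : Convex ℝ Γ)
    (hcone : ∀ t : ℝ, 0 ≤ t → ∀ ξ ∈ Γ, t • ξ ∈ Γ)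
    (hint : (interior Γ ∩ {ξ : Fin n → ℝ | ∀ j, 0 < ξ j}).Nonempty) :
    {x : Fin n → ℝ | (∀ i, 0 ≤ x i) ∧ ∀ ξ ∈ Γ, ∑ j, x j * ξ j ≤ suppFn S ξ} =
      {x : Fin n → ℝ | ∃ s ∈ S, ∃ t : Fin n → ℝ,
        (∀ ξ ∈ Γ, 0 ≤ ∑ j, t j * ξ j) ∧ x = s - t} ∩ {x | ∀ i, 0 ≤ x i} := by
  have hΓne : Γ.Nonempty := hint.mono (Set.inter_subset_left.trans interior_subset)
  ext x
  have hx := mem_sub_dotDual_iff_forall_le_suppFn hc hconv hne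
    (ProperCone.ofConvex Γ hΓne hΓc hΓconv hcone) (x := x)
  simp only [Set.mem_sub, SetLike.mem_coe, ProperCone.mem_dotDual, ProperCone.mem_ofConvex,
    dotProduct, eq_comm (b := x)] at hx
  simp only [Set.mem_ofPred_eq, Set.mem_inter_iff, hx]
  exact and_comm

/-- The `Γ`-hull `Ŝ_Γ = {x ∈ ℝ₊ⁿ : ⟨x,ξ⟩ ≤ φ_S(ξ) ∀ξ ∈ Γ}` equals `(S − Γ°) ∩ ℝ₊ⁿ`. -/
theorem stmt_12 {n : ℕ} (S : Set (Fin n → ℝ)) (hc : IsCompact S) (hconv : Convex ℝ S)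
    (hne : S.Nonempty) (hpos : ∀ s ∈ S, ∀ i, 0 ≤ s i)
    (Γ : Set (Fin n → ℝ)) (hΓc : IsClosed Γ) (hΓconv : Convex ℝ Γ)
    (hcone : ∀ t : ℝ, 0 ≤ t → ∀ ξ ∈ Γ, t • ξ ∈ Γ)
    (hint : (interior Γ ∩ {ξ : Fin n → ℝ | ∀ j, 0 < ξ j}).Nonempty) :
    {x : Fin n → ℝ | (∀ i, 0 ≤ x i) ∧ ∀ ξ ∈ Γ, ∑ j, x j * ξ j ≤ suppFn S ξ} =
      {x : Fin n → ℝ | ∃ s ∈ S, ∃ t : Fin n → ℝ,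
        (∀ ξ ∈ Γ, 0 ≤ ∑ j, t j * ξ j) ∧ x = s - t} ∩ {x | ∀ i, 0 ≤ x i} :=
  stmt_12_general S hc hconv hne Γ hΓc hΓconv hcone hint
end

section
/- Let S ⊆ ℝ₊ⁿ be compact and convex with 0 ∈ S, and Γ a proper closed convex cone containing at least one point with all coordinates positive. Then the support function of the Γ-hull agrees with that of S on Γ: φ_{Ŝ_Γ}(ξ) = φ_S(ξ) for every ξ ∈ Γ, where Ŝ_Γ = (S − Γ°) ∩ ℝ₊ⁿ. -/
/-- `Ŝ_Γ = (S − Γ°) ∩ ℝ₊ⁿ`, with `Γ°` written out as the `t` satisfying `⟨t, η⟩ ≥ 0` on `Γ`. -/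
def gammaHull {n : ℕ} (S Γ : Set (Fin n → ℝ)) : Set (Fin n → ℝ) :=
  {x | ∃ s ∈ S, ∃ t : Fin n → ℝ, (∀ η ∈ Γ, 0 ≤ ∑ j, t j * η j) ∧ x = s - t} ∩ {x | ∀ i, 0 ≤ x i}

section

variable {n : ℕ} {S T Γ : Set (Fin n → ℝ)} {ξ : Fin n → ℝ}

-- No boundedness is needed: mutually dominating sets of reals share their `sSup`, junk value included.
theorem suppFn_eq_of_subset_of_forall_exists_le (hST : S ⊆ T)
    (hle : ∀ x ∈ T, ∃ s ∈ S, ∑ j, x j * ξ j ≤ ∑ j, s j * ξ j) :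
    suppFn T ξ = suppFn S ξ :=
  csSup_eq_csSup_of_forall_exists_le
    (by
      rintro _ ⟨x, hx, rfl⟩
      obtain ⟨s, hs, hxs⟩ := hle x hx
      exact ⟨_, ⟨s, hs, rfl⟩, hxs⟩)
    (by
      rintro _ ⟨s, hs, rfl⟩
      exact ⟨_, ⟨s, hST hs, rfl⟩, le_rfl⟩)

theorem subset_gammaHull (hpos : ∀ s ∈ S, ∀ i, 0 ≤ s i) : S ⊆ gammaHull S Γ :=
  fun s hs => ⟨⟨s, hs, 0, fun η _ => by simp, by simp⟩, hpos s hs⟩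

theorem exists_le_of_mem_gammaHull (hξ : ξ ∈ Γ) :
    ∀ x ∈ gammaHull S Γ, ∃ s ∈ S, ∑ j, x j * ξ j ≤ ∑ j, s j * ξ j := by
  rintro _ ⟨⟨s, hs, t, ht, rfl⟩, -⟩
  have hpair : ∑ j, (s - t) j * ξ j = ∑ j, s j * ξ j - ∑ j, t j * ξ j := by
    simp only [Pi.sub_apply, sub_mul, Finset.sum_sub_distrib]
  exact ⟨s, hs, by linarith [ht ξ hξ]⟩

end

theorem stmt_13_general {n : ℕ} (S : Set (Fin n → ℝ))
    (hpos : ∀ s ∈ S, ∀ i, 0 ≤ s i)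
    (Γ : Set (Fin n → ℝ))
    (ξ : Fin n → ℝ) (hξ : ξ ∈ Γ) :
    suppFn ({x : Fin n → ℝ | ∃ s ∈ S, ∃ t : Fin n → ℝ,
        (∀ η ∈ Γ, 0 ≤ ∑ j, t j * η j) ∧ x = s - t} ∩ {x | ∀ i, 0 ≤ x i}) ξ =
      suppFn S ξ :=
  suppFn_eq_of_subset_of_forall_exists_le (subset_gammaHull hpos) (exists_le_of_mem_gammaHull hξ)

/-- On `Γ`, the support function of the `Γ`-hull `Ŝ_Γ = (S − Γ°) ∩ ℝ₊ⁿ`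
agrees with that of `S`. -/
theorem stmt_13 {n : ℕ} (S : Set (Fin n → ℝ)) (hc : IsCompact S) (hconv : Convex ℝ S)
    (h0 : (0 : Fin n → ℝ) ∈ S) (hpos : ∀ s ∈ S, ∀ i, 0 ≤ s i)
    (Γ : Set (Fin n → ℝ)) (hΓc : IsClosed Γ) (hΓconv : Convex ℝ Γ)
    (hcone : ∀ t : ℝ, 0 ≤ t → ∀ ξ ∈ Γ, t • ξ ∈ Γ)
    (hproper : Γ ≠ Set.univ) (hpt : ∃ ξ ∈ Γ, ∀ j, 0 < ξ j)
    (ξ : Fin n → ℝ) (hξ : ξ ∈ Γ) :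
    suppFn ({x : Fin n → ℝ | ∃ s ∈ S, ∃ t : Fin n → ℝ,
        (∀ η ∈ Γ, 0 ≤ ∑ j, t j * η j) ∧ x = s - t} ∩ {x | ∀ i, 0 ≤ x i}) ξ =
      suppFn S ξ :=
  stmt_13_general S hpos Γ ξ hξ
end

section
/- Let f ∈ O(ℂⁿ) be entire with power series f(z) = Σ_α a_α z^α, and suppose that for some m ∈ ℕ, a ∈ [0, d_m), and constant C > 0, |f(z)| ≤ C(1+|z|)^a · e^{m H_S(z)} for all z ∈ ℂⁿ, where d_m is the L¹-distance between mS and ℕⁿ∖mS. Then a_α = 0 for every α ∈ ℕⁿ ∖ mS, i.e. f ∈ P^S_m(ℂⁿ). -/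
open Pointwise

/-!
Let `α ∉ mS`. Being at `ℓ¹`-distance more than `a` from `mS`, `α` lies outside the compact convex
set `mS + a·B₁` (`B₁` the unit `ℓ¹` ball), whose support function is `m φ_S + a ‖·‖_∞`; a
separating `ξ` thus satisfies `m φ_S(ξ) + a ‖ξ‖_∞ < ⟨α, ξ⟩`. On the torus of polyradius `e^{tξ}`,
`t ≥ 0`, we have `H_S = t φ_S(ξ)` and `(1 + |z|)^a ≲ e^{t a ‖ξ‖_∞}`, so the Cauchy estimate gives
`|a_α| e^{t ⟨α, ξ⟩} ≲ e^{t (m φ_S(ξ) + a ‖ξ‖_∞)}`, which forces `a_α = 0` as `t → ∞`.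
-/

open MeasureTheory Real Filter Topology

section CauchyEstimate

theorem integral_exp_int_mul_I (k : ℤ) :
    ∫ x in Set.Ioc 0 (2 * π), Complex.exp (k * (x * Complex.I)) =
      if k = 0 then ((2 * π : ℝ) : ℂ) else 0 := by
  split_ifs with hk
  · simp [hk, two_pi_pos.le]
  · rw [← intervalIntegral.integral_of_le two_pi_pos.le]
    have hc : (k : ℂ) * Complex.I ≠ 0 := by simp [hk]
    simp_rw [← mul_assoc, mul_right_comm _ _ Complex.I]
    rw [integral_exp_mul_complex hc]
    have : (k : ℂ) * Complex.I * ((2 * π : ℝ) : ℂ) = k * (2 * π * Complex.I) := by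
      push_cast; ring
    rw [this, Complex.exp_int_mul_two_pi_mul_I]
    simp

theorem setIntegral_prod_exp_int_mul_I {ι : Type*} [Fintype ι] (k : ι → ℤ) :
    ∫ θ in Set.univ.pi fun _ : ι => Set.Ioc 0 (2 * π), ∏ j, Complex.exp (k j * (θ j * Complex.I)) =
      if k = 0 then ((2 * π : ℝ) : ℂ) ^ Fintype.card ι else 0 := by
  rw [volume_pi, Measure.restrict_pi_pi,
    integral_fintype_prod_eq_prod (f := fun j (x : ℝ) => Complex.exp (k j * (x * Complex.I)))]
  simp_rw [integral_exp_int_mul_I, Finset.prod_ite_zero, funext_iff]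
  simp

theorem volume_univ_pi_Ioc_lt_top {ι : Type*} [Fintype ι] :
    volume (Set.univ.pi fun _ : ι => Set.Ioc 0 (2 * π)) < ⊤ := by
  simp [volume_pi_pi, ENNReal.mul_lt_top]

theorem volume_real_univ_pi_Ioc {ι : Type*} [Fintype ι] :
    volume.real (Set.univ.pi fun _ : ι => Set.Ioc 0 (2 * π)) = (2 * π) ^ Fintype.card ι := by
  simp [measureReal_def, volume_pi_pi, pi_pos.le]

theorem norm_torusMap_zero_apply {n : ℕ} (r θ : Fin n → ℝ) (j : Fin n) :
    ‖torusMap 0 r θ j‖ = |r j| := by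
  simp [torusMap, Complex.norm_exp_ofReal_mul_I]

theorem norm_exp_neg_natCast_mul_ofReal_mul_I (k : ℕ) (x : ℝ) :
    ‖Complex.exp (-(k * (x * Complex.I)))‖ = 1 := by
  simp [Complex.norm_exp]

theorem prod_torusMap_pow_mul_prod_exp {n : ℕ} (r θ : Fin n → ℝ) (α β : Fin n → ℕ) :
    (∏ j, torusMap 0 r θ j ^ β j) * ∏ j, Complex.exp (-(α j * (θ j * Complex.I))) =
      (∏ j, (r j : ℂ) ^ β j) * ∏ j, Complex.exp (((β j : ℤ) - α j : ℤ) * (θ j * Complex.I)) := by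
  simp_rw [← Finset.prod_mul_distrib]
  refine Finset.prod_congr rfl fun j _ => ?_
  simp only [torusMap, Pi.zero_apply, zero_add, mul_pow, ← Complex.exp_nat_mul, mul_assoc,
    ← Complex.exp_add]
  congr 2
  push_cast
  ring

theorem setIntegral_monomial_torusMap {n : ℕ} (r : Fin n → ℝ) (α β : Fin n → ℕ) (c : ℂ) :
    ∫ θ in Set.univ.pi fun _ => Set.Ioc 0 (2 * π),
        c * (∏ j, torusMap 0 r θ j ^ β j) * ∏ j, Complex.exp (-(α j * (θ j * Complex.I))) =
      if β = α then ((2 * π : ℝ) : ℂ) ^ n * (c * ∏ j, (r j : ℂ) ^ α j) else 0 := by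
  have hk : ((fun j => (β j : ℤ) - α j) = 0) ↔ β = α := by
    simp [funext_iff, sub_eq_zero]
  simp_rw [mul_assoc, prod_torusMap_pow_mul_prod_exp, integral_const_mul,
    setIntegral_prod_exp_int_mul_I, hk, Fintype.card_fin]
  split_ifs with h
  · subst h; ring
  · simp

theorem setIntegral_torusMap_mul_prod_exp {n : ℕ} {f : (Fin n → ℂ) → ℂ}
    {a : (Fin n → ℕ) → ℂ} (hexp : ∀ z, HasSum (fun β => a β * ∏ j, z j ^ β j) (f z))
    (r : Fin n → ℝ) (α : Fin n → ℕ) :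
    ∫ θ in Set.univ.pi fun _ => Set.Ioc 0 (2 * π),
        f (torusMap 0 r θ) * ∏ j, Complex.exp (-(α j * (θ j * Complex.I))) =
      ((2 * π : ℝ) : ℂ) ^ n * (a α * ∏ j, (r j : ℂ) ^ α j) := by
  have hF : HasSum (fun β => ∫ θ in Set.univ.pi fun _ => Set.Ioc 0 (2 * π),
        a β * (∏ j, torusMap 0 r θ j ^ β j) * ∏ j, Complex.exp (-(α j * (θ j * Complex.I))))
      (∫ θ in Set.univ.pi fun _ => Set.Ioc 0 (2 * π),
        f (torusMap 0 r θ) * ∏ j, Complex.exp (-(α j * (θ j * Complex.I)))) := by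
    refine hasSum_integral_of_dominated_convergence (fun β _ => ‖a β‖ * ∏ j, |r j| ^ β j)
      (fun β => Continuous.aestronglyMeasurable (by unfold torusMap; fun_prop))
      (fun β => ae_of_all _ fun θ => ?_) (ae_of_all _ fun _ => ?_)
      (integrableOn_const volume_univ_pi_Ioc_lt_top.ne) (ae_of_all _ fun θ => ?_)
    · simp [norm_prod, norm_torusMap_zero_apply, norm_exp_neg_natCast_mul_ofReal_mul_I]
    · simpa [norm_prod] using (hexp fun j => ((|r j| : ℝ) : ℂ)).summable.norm
    · exact (hexp _).mul_right _
  simp_rw [setIntegral_monomial_torusMap] at hF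
  simpa using hF.unique (hasSum_single α fun β hβ => if_neg hβ)

theorem norm_coeff_mul_prod_le_of_norm_torusMap_le {n : ℕ} {f : (Fin n → ℂ) → ℂ}
    {a : (Fin n → ℕ) → ℂ} (hexp : ∀ z, HasSum (fun β => a β * ∏ j, z j ^ β j) (f z))
    {r : Fin n → ℝ} {M : ℝ} (hM : ∀ θ, ‖f (torusMap 0 r θ)‖ ≤ M) (α : Fin n → ℕ) :
    ‖a α‖ * ∏ j, |r j| ^ α j ≤ M := by
  have h := norm_setIntegral_le_of_norm_le_const (f := fun θ =>
      f (torusMap 0 r θ) * ∏ j, Complex.exp (-(α j * (θ j * Complex.I))))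
    volume_univ_pi_Ioc_lt_top fun θ _ => by
      simpa [norm_prod, norm_exp_neg_natCast_mul_ofReal_mul_I] using hM θ
  rw [setIntegral_torusMap_mul_prod_exp hexp, volume_real_univ_pi_Ioc, Fintype.card_fin] at h
  simp only [Complex.ofReal_mul, Complex.ofReal_ofNat, Complex.norm_mul, norm_pow,
    Complex.norm_ofNat, Complex.norm_real, norm_eq_abs, abs_of_pos pi_pos, norm_prod] at h
  rw [mul_comm M] at h
  exact le_of_mul_le_mul_left h (by positivity)

end CauchyEstimate

section Separation

theorem convex_setOf_sum_abs_le {ι : Type*} [Fintype ι] (a : ℝ) :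
    Convex ℝ {y : ι → ℝ | ∑ j, |y j| ≤ a} := by
  intro y hy w hw p q hp hq hpq
  calc ∑ j, |p * y j + q * w j| ≤ ∑ j, (p * |y j| + q * |w j|) := by
        gcongr with j
        exact (abs_add_le _ _).trans_eq <| by
          rw [abs_mul, abs_mul, abs_of_nonneg hp, abs_of_nonneg hq]
    _ = p * ∑ j, |y j| + q * ∑ j, |w j| := by simp [Finset.sum_add_distrib, Finset.mul_sum]
    _ ≤ p * a + q * a := by gcongr; exacts [hy, hw]
    _ = a := by rw [← add_mul, hpq, one_mul]

theorem isCompact_setOf_sum_abs_le {ι : Type*} [Fintype ι] (a : ℝ) :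
    IsCompact {y : ι → ℝ | ∑ j, |y j| ≤ a} := by
  refine Metric.isCompact_of_isClosed_isBounded (isClosed_le (by fun_prop) continuous_const)
    ((Metric.isBounded_closedBall (x := 0) (r := a)).subset fun y hy => ?_)
  have hsum : ∑ j, |y j| ≤ a := hy
  have ha : 0 ≤ a := (Finset.sum_nonneg fun j _ => abs_nonneg _).trans hsum
  refine mem_closedBall_zero_iff.2 ((pi_norm_le_iff_of_nonneg ha).2 fun j => ?_)
  exact (Finset.single_le_sum (fun i _ => abs_nonneg (y i)) (Finset.mem_univ j)).trans hsum

theorem exists_sum_abs_le_dotProduct_eq_mul_norm {ι : Type*} [Fintype ι] {a : ℝ} (ha : 0 ≤ a)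
    (ξ : ι → ℝ) : ∃ y : ι → ℝ, ∑ j, |y j| ≤ a ∧ y ⬝ᵥ ξ = a * ‖ξ‖ := by
  classical
  cases isEmpty_or_nonempty ι
  · exact ⟨0, by simp [ha], by simp [Subsingleton.elim ξ 0]⟩
  obtain ⟨j, hj⟩ := (IsGreatest.pi_norm ξ).1
  refine ⟨Pi.single j (a * SignType.sign (ξ j)), ?_, ?_⟩
  · rw [Finset.sum_eq_single j (fun i _ hi => by simp [hi]) (by simp)]
    rw [Pi.single_eq_same, abs_mul, abs_of_nonneg ha]
    exact mul_le_of_le_one_right ha (by rcases SignType.sign (ξ j) with _ | _ | _ <;> simp)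
  · simp [single_dotProduct, ← hj, mul_assoc]

theorem exists_dotProduct_add_mul_norm_lt {ι : Type*} [Fintype ι] {K : Set (ι → ℝ)}
    (hK : IsCompact K) (hKconv : Convex ℝ K) {a : ℝ} (ha : 0 ≤ a) {α : ι → ℝ}
    (hα : ∀ x ∈ K, a < ∑ j, |x j - α j|) :
    ∃ ξ : ι → ℝ, ∃ u, (∀ x ∈ K, x ⬝ᵥ ξ + a * ‖ξ‖ < u) ∧ u < α ⬝ᵥ ξ := by
  classical
  have hαK : α ∉ K + {y | ∑ j, |y j| ≤ a} := by
    rintro ⟨x, hx, y, hy, rfl⟩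
    have := hα x hx
    simp only [Pi.add_apply, sub_add_cancel_left, abs_neg] at this
    exact this.not_ge hy
  obtain ⟨φ, u, hφ, hu⟩ := geometric_hahn_banach_closed_point
    (hKconv.add (convex_setOf_sum_abs_le a)) (hK.add (isCompact_setOf_sum_abs_le a)).isClosed hαK
  set ξ : ι → ℝ := fun i => φ fun j => if i = j then 1 else 0
  have hφξ : ∀ x, φ x = x ⬝ᵥ ξ := fun x => (φ : (ι → ℝ) →ₗ[ℝ] ℝ).pi_apply_eq_sum_univ x
  obtain ⟨y, hy, hyξ⟩ := exists_sum_abs_le_dotProduct_eq_mul_norm ha ξ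
  refine ⟨ξ, u, fun x hx => ?_, (hφξ α).symm ▸ hu⟩
  simpa [hφξ, add_dotProduct, hyξ] using hφ (x + y) (Set.add_mem_add hx hy)

end Separation

section GrowthOnTorus

theorem suppFn_smul_set {n : ℕ} (S : Set (Fin n → ℝ)) {c : ℝ} (hc : 0 ≤ c) (ξ : Fin n → ℝ) :
    suppFn (c • S) ξ = c * suppFn S ξ := by
  rw [suppFn, suppFn, ← smul_eq_mul, ← Real.sSup_smul_of_nonneg hc]
  congr 1
  ext v
  simp [Set.mem_smul_set, Finset.mul_sum, mul_assoc]

theorem HS_torusMap_zero {n : ℕ} (S : Set (Fin n → ℝ)) (r θ : Fin n → ℝ) :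
    HS S (torusMap 0 r θ) = suppFn S fun j => Real.log (r j) := by
  simp [HS, norm_torusMap_zero_apply, Real.log_abs]

theorem one_add_sqrt_sum_exp_sq_le {ι : Type*} [Fintype ι] (ξ : ι → ℝ) {t : ℝ} (ht : 0 ≤ t) :
    1 + √(∑ j, exp (t * ξ j) ^ 2) ≤ (1 + √(Fintype.card ι)) * exp (t * ‖ξ‖) := by
  have h1 : 1 ≤ exp (t * ‖ξ‖) := one_le_exp (mul_nonneg ht (norm_nonneg _))
  have h2 : √(∑ j, exp (t * ξ j) ^ 2) ≤ √(Fintype.card ι) * exp (t * ‖ξ‖) := by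
    rw [← sqrt_sq (exp_pos _).le, ← sqrt_mul (Nat.cast_nonneg _)]
    gcongr
    calc ∑ j, exp (t * ξ j) ^ 2 ≤ ∑ _j : ι, exp (t * ‖ξ‖) ^ 2 := by
          gcongr with j
          exact (le_abs_self _).trans (norm_le_pi_norm ξ j)
      _ = _ := by simp
  nlinarith [sqrt_nonneg (Fintype.card ι)]

theorem mul_HS_torusMap_exp_le {n : ℕ} {S : Set (Fin n → ℝ)} (hS : S.Nonempty) {m : ℝ}
    (hm : 0 ≤ m) {ξ : Fin n → ℝ} {c : ℝ} (h : ∀ x ∈ m • S, x ⬝ᵥ ξ ≤ c) {t : ℝ} (ht : 0 ≤ t)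
    (θ : Fin n → ℝ) : m * HS S (torusMap 0 (fun j => exp (t * ξ j)) θ) ≤ t * c := by
  rw [HS_torusMap_zero, ← suppFn_smul_set S hm]
  refine csSup_le ((hS.smul_set).image _) (Set.forall_mem_image.2 fun x hx => ?_)
  have hsum : ∑ j, x j * Real.log (exp (t * ξ j)) = t * x ⬝ᵥ ξ := by
    simp only [Real.log_exp, dotProduct, Finset.mul_sum]
    exact Finset.sum_congr rfl fun j _ => by ring
  exact hsum ▸ mul_le_mul_of_nonneg_left (h x hx) ht

theorem growth_torusMap_exp_le {n : ℕ} {S : Set (Fin n → ℝ)} (hS : S.Nonempty) {m : ℕ}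
    {ξ : Fin n → ℝ} {a C u t : ℝ} (ha : 0 ≤ a) (hC : 0 ≤ C) (ht : 0 ≤ t)
    (hu : ∀ x ∈ (m : ℝ) • S, x ⬝ᵥ ξ + a * ‖ξ‖ ≤ u) (θ : Fin n → ℝ) :
    C * (1 + √(∑ j, ‖torusMap 0 (fun j => exp (t * ξ j)) θ j‖ ^ 2)) ^ a *
        exp (m * HS S (torusMap 0 (fun j => exp (t * ξ j)) θ)) ≤
      C * (1 + √n) ^ a * exp (t * u) := by
  have hsqrt := one_add_sqrt_sum_exp_sq_le ξ ht
  have hHS := mul_HS_torusMap_exp_le hS (Nat.cast_nonneg m)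
    (c := u - a * ‖ξ‖) (fun x hx => by linarith [hu x hx]) ht θ
  rw [Fintype.card_fin] at hsqrt
  simp only [norm_torusMap_zero_apply, abs_exp]
  calc C * (1 + √(∑ j, exp (t * ξ j) ^ 2)) ^ a * exp (m * HS S _)
      ≤ C * ((1 + √n) * exp (t * ‖ξ‖)) ^ a * exp (t * (u - a * ‖ξ‖)) := by
        gcongr C * ?_ ^ a * exp ?_
    _ = C * (1 + √n) ^ a * exp (t * u) := by
        rw [mul_rpow (by positivity) (exp_pos _).le, ← exp_mul, mul_assoc, mul_assoc,
          mul_assoc, ← exp_add]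
        ring_nf

theorem prod_abs_exp_pow {ι : Type*} [Fintype ι] (t : ℝ) (ξ : ι → ℝ) (α : ι → ℕ) :
    ∏ j, |exp (t * ξ j)| ^ α j = exp (t * (fun j => (α j : ℝ)) ⬝ᵥ ξ) := by
  simp only [abs_exp, ← exp_nat_mul, ← exp_sum, dotProduct, Finset.mul_sum]
  exact congrArg exp (Finset.sum_congr rfl fun j _ => by ring)

end GrowthOnTorus

theorem nonpos_of_forall_mul_exp_le {x K A u : ℝ} (hu : u < A)
    (h : ∀ t ≥ 0, x * exp (t * A) ≤ K * exp (t * u)) : x ≤ 0 := by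
  have hx : ∀ t ≥ 0, x ≤ K * exp (t * (u - A)) := fun t ht => by
    rw [mul_sub, exp_sub, ← mul_div_assoc, le_div_iff₀ (exp_pos _)]
    exact h t ht
  have hlim : Tendsto (fun t => K * exp (t * (u - A))) atTop (𝓝 0) := by
    simpa using (tendsto_exp_atBot.comp
      (tendsto_id.atTop_mul_const_of_neg (sub_neg.2 hu))).const_mul K
  exact ge_of_tendsto hlim (eventually_atTop.2 ⟨0, hx⟩)

theorem stmt_16_general {n : ℕ} (S : Set (Fin n → ℝ)) (hc : IsCompact S) (hconv : Convex ℝ S)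
    (h0 : (0 : Fin n → ℝ) ∈ S)
    (f : (Fin n → ℂ) → ℂ)
    (a : (Fin n → ℕ) → ℂ)
    (hexp : ∀ z : Fin n → ℂ, HasSum (fun α : Fin n → ℕ => a α * ∏ j, z j ^ α j) (f z))
    (m : ℕ) (dm : ℝ)
    (hdm : dm = sInf {d : ℝ | ∃ x ∈ (m : ℝ) • S, ∃ β : Fin n → ℕ,
        (fun j => (β j : ℝ)) ∉ (m : ℝ) • S ∧ d = ∑ j, |x j - (β j : ℝ)|})
    (aexp C : ℝ) (ha0 : 0 ≤ aexp) (ha : aexp < dm) (hC : 0 < C)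
    (hgrow : ∀ z : Fin n → ℂ, (∀ j, z j ≠ 0) →
        ‖f z‖ ≤
          C * (1 + Real.sqrt (∑ j, ‖z j‖ ^ 2)) ^ aexp *
            Real.exp (m * HS S z)) :
    ∀ α : Fin n → ℕ, (fun j => (α j : ℝ)) ∉ (m : ℝ) • S → a α = 0 := by
  intro α hα
  have hdist : ∀ x ∈ (m : ℝ) • S, aexp < ∑ j, |x j - α j| := fun x hx =>
    ha.trans_le <| hdm ▸ csInf_le ⟨0, fun _ ⟨_, _, _, _, hd⟩ => hd ▸ by positivity⟩
      ⟨x, hx, α, hα, rfl⟩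
  obtain ⟨ξ, u, hK, hu⟩ :=
    exists_dotProduct_add_mul_norm_lt (hc.smul (m : ℝ)) (hconv.smul (m : ℝ)) ha0 hdist
  refine norm_le_zero_iff.1 <|
    nonpos_of_forall_mul_exp_le (K := C * (1 + √n) ^ aexp) hu fun t ht => ?_
  rw [← prod_abs_exp_pow]
  refine norm_coeff_mul_prod_le_of_norm_torusMap_le hexp (fun θ => ?_) α
  refine (hgrow _ fun j => ?_).trans
    (growth_torusMap_exp_le ⟨0, h0⟩ ha0 hC.le ht (fun x hx => (hK x hx).le) θ)
  rw [← norm_ne_zero_iff, norm_torusMap_zero_apply]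
  positivity

/-- Liouville-type theorem: an entire function with growth `C(1+|z|)^a e^{m H_S(z)}`
for some `a < d_m`, where `d_m` is the `L¹`-distance between `mS` and `ℕⁿ∖mS`, has all
Taylor coefficients with exponent outside `mS` equal to zero, i.e. `f ∈ P^S_m(ℂⁿ)`. -/
theorem stmt_16 {n : ℕ} (S : Set (Fin n → ℝ)) (hc : IsCompact S) (hconv : Convex ℝ S)
    (h0 : (0 : Fin n → ℝ) ∈ S) (hpos : ∀ s ∈ S, ∀ i, 0 ≤ s i)
    (f : (Fin n → ℂ) → ℂ) (hf : Differentiable ℂ f)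
    (a : (Fin n → ℕ) → ℂ)
    (hexp : ∀ z : Fin n → ℂ, HasSum (fun α : Fin n → ℕ => a α * ∏ j, z j ^ α j) (f z))
    (m : ℕ) (dm : ℝ)
    (hdm : dm = sInf {d : ℝ | ∃ x ∈ (m : ℝ) • S, ∃ β : Fin n → ℕ,
        (fun j => (β j : ℝ)) ∉ (m : ℝ) • S ∧ d = ∑ j, |x j - (β j : ℝ)|})
    (aexp C : ℝ) (ha0 : 0 ≤ aexp) (ha : aexp < dm) (hC : 0 < C)
    (hgrow : ∀ z : Fin n → ℂ, (∀ j, z j ≠ 0) →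
        ‖f z‖ ≤
          C * (1 + Real.sqrt (∑ j, ‖z j‖ ^ 2)) ^ aexp *
            Real.exp (m * HS S z)) :
    ∀ α : Fin n → ℕ, (fun j => (α j : ℝ)) ∉ (m : ℝ) • S → a α = 0 :=
  stmt_16_general S hc hconv h0 f a hexp m dm hdm aexp C ha0 ha hC hgrow
end

section
/- Let m ≥ 4 and S = conv{(0,0),(a,0),(b,1−b),(0,1)} ⊂ ℝ₊² with 0 < a < 1/m, a < b < 1, m(1−b) < 1, and (b−a)/(1−b) > m−2−am. Then for each integer 1 ≤ k ≤ m−3, the integral ∫_{ℂ²} |z₁|^{2k} e^{−2m H_S(z)} dλ(z) is finite, yet (k,0) ∉ mS. -/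
/-!
The weight is integrable because `(k + 1, 1)` is an interior point of `mS`: for a small `c > 0`,
`(k + 1) ξ₁ + ξ₂ + c (|ξ₁| + |ξ₂|) ≤ m φ_S(ξ)`, which in the coordinates `ξᵢ = log |zᵢ|` bounds
`|z₁|^{2k} e^{-2m H_S(z)}` by `∏ᵢ |zᵢ|⁻² e^{-2c |log |zᵢ||}`. Each factor is integrable on `ℂ`:
in polar coordinates and after the substitution `|w| = eᵗ` its integral becomes `∫ e^{-2c|t|} dt`.
On the other hand `mS` meets the first axis only in `[0, ma]`, and `ma < 1 ≤ k`.
-/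

open Pointwise MeasureTheory

open Set

lemma Real.exists_ge_of_mem_convexHull {T : Set ℝ} {x : ℝ} (hx : x ∈ convexHull ℝ T) :
    ∃ y ∈ T, x ≤ y :=
  convexHull_min (t := lowerClosure T) (fun _ hy => subset_lowerClosure hy)
    (lowerClosure T).lower.ordConnected.convex hx

lemma Real.sSup_convexHull (T : Set ℝ) : sSup (convexHull ℝ T) = sSup T :=
  csSup_eq_csSup_of_forall_exists_le (fun _ hx => Real.exists_ge_of_mem_convexHull hx)
    (fun y hy => ⟨y, subset_convexHull ℝ T hy, le_rfl⟩)

lemma Real.bddAbove_convexHull {T : Set ℝ} (hT : BddAbove T) : BddAbove (convexHull ℝ T) := by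
  obtain ⟨M, hM⟩ := hT
  refine ⟨M, fun x hx => ?_⟩
  obtain ⟨y, hy, hxy⟩ := Real.exists_ge_of_mem_convexHull hx
  exact hxy.trans (hM hy)

lemma isLinearMap_sum_mul {n : ℕ} (ξ : Fin n → ℝ) :
    IsLinearMap ℝ (fun s : Fin n → ℝ => ∑ j, s j * ξ j) :=
  ((dotProductBilin ℝ ℝ).flip ξ).isLinear

lemma suppFn_convexHull {n : ℕ} (S : Set (Fin n → ℝ)) (ξ : Fin n → ℝ) :
    suppFn (convexHull ℝ S) ξ = suppFn S ξ := by
  rw [suppFn, suppFn, (isLinearMap_sum_mul ξ).image_convexHull, Real.sSup_convexHull]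

lemma sum_mul_le_suppFn_convexHull {n : ℕ} {S : Set (Fin n → ℝ)} (hS : S.Finite)
    {s : Fin n → ℝ} (hs : s ∈ convexHull ℝ S) (ξ : Fin n → ℝ) :
    ∑ j, s j * ξ j ≤ suppFn (convexHull ℝ S) ξ := by
  refine le_csSup ?_ ⟨s, hs, rfl⟩
  rw [(isLinearMap_sum_mul ξ).image_convexHull]
  exact Real.bddAbove_convexHull (hS.image _).bddAbove

lemma suppFn_quadrilateral (a b : ℝ) (ξ : Fin 2 → ℝ) :
    suppFn (convexHull ℝ {![0, 0], ![a, 0], ![b, 1 - b], ![0, 1]}) ξ =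
      max 0 (max (a * ξ 0) (max (b * ξ 0 + (1 - b) * ξ 1) (ξ 1))) := by
  rw [suppFn_convexHull, suppFn, image_insert_eq, image_insert_eq, image_insert_eq,
    image_singleton, csSup_insert (by simp) (by simp), csSup_insert (by simp) (by simp),
    csSup_pair]
  simp [Fin.sum_univ_two]

lemma Real.integrable_exp_neg_mul_abs {c : ℝ} (hc : 0 < c) :
    Integrable (fun t : ℝ => Real.exp (-c * |t|)) := by
  rw [← integrableOn_univ, ← Iic_union_Ioi (a := (0 : ℝ))]
  refine IntegrableOn.union ?_ ?_
  · refine (integrableOn_exp_mul_Iic hc 0).congr_fun (fun t ht => ?_) measurableSet_Iic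
    rw [abs_of_nonpos ht]; ring_nf
  · refine (integrableOn_exp_mul_Ioi (neg_neg_of_pos hc) 0).congr_fun (fun t ht => ?_)
      measurableSet_Ioi
    rw [abs_of_pos ht]

lemma integrable_exp_neg_finrank_mul_log_norm {E : Type*} [NormedAddCommGroup E]
    [NormedSpace ℝ E] [FiniteDimensional ℝ E] [Nontrivial E] [MeasurableSpace E] [BorelSpace E]
    (μ : Measure E) [μ.IsAddHaarMeasure] {c : ℝ} (hc : 0 < c) :
    Integrable (fun x : E =>
      Real.exp (-(Module.finrank ℝ E * Real.log ‖x‖ + c * |Real.log ‖x‖|))) μ := by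
  refine (integrable_fun_norm_addHaar μ (f := fun r =>
    Real.exp (-(Module.finrank ℝ E * Real.log r + c * |Real.log r|)))).2 ?_
  rw [← Real.range_exp, ← image_univ, integrableOn_image_iff_integrableOn_abs_deriv_smul
    MeasurableSet.univ (fun t _ => (Real.hasDerivAt_exp t).hasDerivWithinAt)
    Real.exp_injective.injOn, integrableOn_univ]
  refine (Real.integrable_exp_neg_mul_abs hc).congr (ae_of_all _ fun t => ?_)
  simp only [smul_eq_mul, Real.log_exp, abs_of_pos (Real.exp_pos t), ← Real.exp_nat_mul,
    ← Real.exp_add]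
  congr 1
  push_cast [Nat.cast_sub (Module.finrank_pos (R := ℝ) (M := E))]
  ring

lemma mul_add_add_mul_abs_le {K m b c x y M : ℝ} (hb : 0 < b) (hc0 : 0 ≤ c) (hc1 : c ≤ 1)
    (hK : 1 ≤ K) (hKb : K + c ≤ m * b) (hmb : m * (1 - b) ≤ 1 - c) (hKm : K + 1 + 2 * c ≤ m)
    (hM0 : 0 ≤ M) (hMb : b * x + (1 - b) * y ≤ M) (hMy : y ≤ M) :
    K * x + y + c * (|x| + |y|) ≤ m * M := by
  have hm : 0 ≤ m := by linarith
  rcases le_total x 0 with hx | hx <;> rcases le_total y 0 with hy | hy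
  · rw [abs_of_nonpos hx, abs_of_nonpos hy]
    nlinarith [mul_nonneg hm hM0]
  · rw [abs_of_nonpos hx, abs_of_nonneg hy]
    nlinarith [mul_le_mul_of_nonneg_left hMy hm]
  · rw [abs_of_nonneg hx, abs_of_nonpos hy]
    nlinarith [mul_le_mul_of_nonneg_left hMb hm]
  · rw [abs_of_nonneg hx, abs_of_nonneg hy]
    -- b * lhs ≤ (K + c) * (b * x + (1 - b) * y) + (m * b - (K + c)) * y ≤ b * (m * M)
    refine le_of_mul_le_mul_left ?_ hb
    nlinarith [mul_le_mul_of_nonneg_left hMb (by linarith : 0 ≤ K + c),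
      mul_le_mul_of_nonneg_left hMy (by linarith : 0 ≤ m * b - (K + c)),
      mul_nonneg (mul_nonneg hb.le hy) (by linarith : 0 ≤ m - (K + 1 + 2 * c))]

lemma notMem_smul_convexHull_quadrilateral {a b m k : ℝ} (ha : 0 ≤ a) (hab : a < b) (hb : b < 1)
    (hm : 0 ≤ m) (hk : m * a < k) :
    ![k, 0] ∉ m • convexHull ℝ ({![0, 0], ![a, 0], ![b, 1 - b], ![0, 1]} : Set (Fin 2 → ℝ)) := by
  rintro ⟨s, hs, hsk⟩
  have hs0 : m * s 0 = k := by simpa using congrFun hsk 0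
  have hs1 : m * s 1 = 0 := by simpa using congrFun hsk 1
  -- `![1 - b, a - b]` is the outer normal of the edge from `(a, 0)` to `(b, 1 - b)`.
  have hsupp := sum_mul_le_suppFn_convexHull (toFinite _) hs ![1 - b, a - b]
  rw [suppFn_quadrilateral, Fin.sum_univ_two] at hsupp
  simp only [Matrix.cons_val_zero, Matrix.cons_val_one] at hsupp
  have hedge : s 0 * (1 - b) + s 1 * (a - b) ≤ a * (1 - b) := by
    refine hsupp.trans (max_le (mul_nonneg ha (by linarith))
      (max_le le_rfl (max_le (le_of_eq (by ring)) ?_)))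
    nlinarith
  nlinarith [mul_le_mul_of_nonneg_left hedge hm]

lemma norm_pow_mul_exp_neg_HS_le {a b c m : ℝ} {k : ℕ} (hb : 0 < b) (hc0 : 0 ≤ c) (hc1 : c ≤ 1)
    (hkb : k + 1 + c ≤ m * b) (hmb : m * (1 - b) ≤ 1 - c) (hkm : k + 2 + 2 * c ≤ m)
    (z : Fin 2 → ℂ) :
    ‖z 0‖ ^ (2 * k) *
        Real.exp (-(2 * m) * HS (convexHull ℝ {![0, 0], ![a, 0], ![b, 1 - b], ![0, 1]}) z) ≤
      ∏ i, Real.exp (-(2 * Real.log ‖z i‖ + 2 * c * |Real.log ‖z i‖|)) := by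
  set x := Real.log ‖z 0‖
  set y := Real.log ‖z 1‖
  set H := HS (convexHull ℝ {![0, 0], ![a, 0], ![b, 1 - b], ![0, 1]}) z
  have hH : H = max 0 (max (a * x) (max (b * x + (1 - b) * y) y)) := suppFn_quadrilateral a b _
  have hkey : (k + 1) * x + y + c * (|x| + |y|) ≤ m * H :=
    mul_add_add_mul_abs_le hb hc0 hc1 (by simp) hkb hmb (by linarith) (by simp [hH])
      (by simp [hH]) (by simp [hH])
  have hpow : ‖z 0‖ ^ (2 * k) ≤ Real.exp (x * (2 * k)) := by
    have := Real.abs_rpow_le_exp_log_mul ‖z 0‖ (2 * k : ℕ)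
    rw [Real.rpow_natCast, abs_of_nonneg (by positivity)] at this
    exact_mod_cast this
  calc ‖z 0‖ ^ (2 * k) * Real.exp (-(2 * m) * H)
      ≤ Real.exp (x * (2 * k)) * Real.exp (-(2 * m) * H) := by gcongr
    _ ≤ Real.exp (-(2 * x + 2 * c * |x|) + -(2 * y + 2 * c * |y|)) := by
      rw [← Real.exp_add, Real.exp_le_exp]
      linarith
    _ = _ := by rw [Real.exp_add, Fin.prod_univ_two]

theorem stmt_18_general (m : ℕ) (a b : ℝ)
    (ha0 : 0 < a) (ham : a < 1 / (m : ℝ)) (hab : a < b) (hb1 : b < 1)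
    (hmb : (m : ℝ) * (1 - b) < 1)
    (k : ℕ) (hk1 : 1 ≤ k) (hkm : k ≤ m - 3) :
    Integrable (fun z : Fin 2 → ℂ =>
        ‖z 0‖ ^ (2 * k) *
          Real.exp (-(2 * (m : ℝ)) *
            HS (convexHull ℝ {![0, 0], ![a, 0], ![b, 1 - b], ![0, 1]}) z)) ∧
      ![(k : ℝ), 0] ∉ (m : ℝ) • convexHull ℝ ({![0, 0], ![a, 0], ![b, 1 - b], ![0, 1]} :
        Set (Fin 2 → ℝ)) := by
  have hk3m : (k : ℝ) + 3 ≤ m := by exact_mod_cast (by omega : k + 3 ≤ m)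
  have hk : (1 : ℝ) ≤ k := by exact_mod_cast hk1
  have hma : (m : ℝ) * a < 1 := by
    rwa [lt_div_iff₀ (by linarith), mul_comm] at ham
  refine ⟨?_, notMem_smul_convexHull_quadrilateral ha0.le hab hb1 (by positivity) (by linarith)⟩
  obtain ⟨c, hc0, hc1, hcb⟩ : ∃ c : ℝ, 0 < c ∧ c ≤ 1 / 2 ∧ (m : ℝ) * (1 - b) ≤ 1 - c :=
    ⟨min (1 / 2) ((1 - m * (1 - b)) / 2), lt_min (by norm_num) (by linarith), min_le_left _ _, by
      linarith [min_le_right (1 / 2 : ℝ) ((1 - m * (1 - b)) / 2)]⟩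
  have hweight : Integrable (fun z : Fin 2 → ℂ =>
      ∏ i, Real.exp (-(2 * Real.log ‖z i‖ + 2 * c * |Real.log ‖z i‖|))) := by
    refine Integrable.fintype_prod
      (f := fun _ w => Real.exp (-(2 * Real.log ‖w‖ + 2 * c * |Real.log ‖w‖|))) fun _ => ?_
    simpa using integrable_exp_neg_finrank_mul_log_norm (E := ℂ) volume (mul_pos two_pos hc0)
  have hmeas : Measurable (fun z : Fin 2 → ℂ => ‖z 0‖ ^ (2 * k) * Real.exp (-(2 * (m : ℝ)) *
      HS (convexHull ℝ {![0, 0], ![a, 0], ![b, 1 - b], ![0, 1]}) z)) := by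
    simp only [HS, suppFn_quadrilateral]
    fun_prop
  refine hweight.mono' hmeas.aestronglyMeasurable (ae_of_all _ fun z => ?_)
  rw [Real.norm_of_nonneg (by positivity)]
  exact norm_pow_mul_exp_neg_HS_le (by linarith) hc0.le (by linarith) (by linarith) hcb
    (by linarith) z

/-- Example 7.4: for the quadrilateral `S = conv{(0,0),(a,0),(b,1−b),(0,1)}` with the
stated parameters, `z₁^k` has finite weighted `L²` norm with weight `e^{−2mH_S}`, but
`(k,0) ∉ mS`. -/
theorem stmt_18 (m : ℕ) (hm : 4 ≤ m) (a b : ℝ)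
    (ha0 : 0 < a) (ham : a < 1 / (m : ℝ)) (hab : a < b) (hb1 : b < 1)
    (hmb : (m : ℝ) * (1 - b) < 1)
    (hslope : (b - a) / (1 - b) > (m : ℝ) - 2 - a * m)
    (k : ℕ) (hk1 : 1 ≤ k) (hkm : k ≤ m - 3) :
    Integrable (fun z : Fin 2 → ℂ =>
        ‖z 0‖ ^ (2 * k) *
          Real.exp (-(2 * (m : ℝ)) *
            HS (convexHull ℝ {![0, 0], ![a, 0], ![b, 1 - b], ![0, 1]}) z)) ∧
      ![(k : ℝ), 0] ∉ (m : ℝ) • convexHull ℝ ({![0, 0], ![a, 0], ![b, 1 - b], ![0, 1]} :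
        Set (Fin 2 → ℝ)) :=
  stmt_18_general m a b ha0 ham hab hb1 hmb k hk1 hkm
end
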